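/- arXiv:0901.4888 — 9 statements merged into one kernel-verified Lean document; each statement's English description precedes it below -/
import Mathlib

section
/- Let L be a bounded distributive lattice and n ≥ 1. A function f : Lⁿ → L is a lattice polynomial function if and only if for every x ∈ Lⁿ and every k with 1 ≤ k ≤ n one has f(x) = med(f(x_k^0), x_k, f(x_k^1)). -/
open Classical

variable {L : Type*}

section Defs

variable [DistribLattice L] [BoundedOrder L]

/-- The ternary median term. -/
def med (x y z : L) : L := (x ⊔ y) ⊓ (x ⊔ z) ⊓ (y ⊔ z)

/-- Lattice polynomial functions of arity `n`: the smallest class of functions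
`(Fin n → L) → L` containing projections and constants and closed under
pointwise binary meets and joins. -/
inductive IsLatticePolynomial {n : ℕ} : ((Fin n → L) → L) → Prop
  | proj (k : Fin n) : IsLatticePolynomial fun x => x k
  | const (c : L) : IsLatticePolynomial fun _ => c
  | inf {f g : (Fin n → L) → L} :
      IsLatticePolynomial f → IsLatticePolynomial g →
      IsLatticePolynomial fun x => f x ⊓ g x
  | sup {f g : (Fin n → L) → L} :
      IsLatticePolynomial f → IsLatticePolynomial g →
      IsLatticePolynomial fun x => f x ⊔ g x

/-- Unary lattice polynomial functions: the smallest class of functions `L → L`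
containing the identity and constants and closed under pointwise binary meets
and joins. -/
inductive IsUnaryLatticePolynomial : (L → L) → Prop
  | id : IsUnaryLatticePolynomial fun x : L => x
  | const (c : L) : IsUnaryLatticePolynomial fun _ => c
  | inf {f g : L → L} :
      IsUnaryLatticePolynomial f → IsUnaryLatticePolynomial g →
      IsUnaryLatticePolynomial fun x => f x ⊓ g x
  | sup {f g : L → L} :
      IsUnaryLatticePolynomial f → IsUnaryLatticePolynomial g →
      IsUnaryLatticePolynomial fun x => f x ⊔ g x

/-- `h : L → L` preserves binary meets. -/
def PreservesInf (h : L → L) : Prop := ∀ x y : L, h (x ⊓ y) = h x ⊓ h y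

/-- `h : L → L` preserves binary joins. -/
def PreservesSup (h : L → L) : Prop := ∀ x y : L, h (x ⊔ y) = h x ⊔ h y

/-- Condition (H): `f(x ∧ c̄) = f(x) ∧ c` for all `c ∈ [f(0̄), f(1̄)]`. -/
def CondH {n : ℕ} (f : (Fin n → L) → L) : Prop :=
  ∀ (x : Fin n → L) (c : L), f (fun _ => ⊥) ≤ c → c ≤ f (fun _ => ⊤) →
    (f fun i => x i ⊓ c) = f x ⊓ c

/-- Condition (H*), the dual of (H): `f(x ∨ c̄) = f(x) ∨ c` for all `c ∈ [f(0̄), f(1̄)]`. -/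
def CondHDual {n : ℕ} (f : (Fin n → L) → L) : Prop :=
  ∀ (x : Fin n → L) (c : L), f (fun _ => ⊥) ≤ c → c ≤ f (fun _ => ⊤) →
    (f fun i => x i ⊔ c) = f x ⊔ c

/-- Condition (V): `f(x) = f(x ∧ c̄) ∨ f([x]_c)` for all `c ∈ [f(0̄), f(1̄)]`,
where the `i`-th component of `[x]_c` is `0` if `x i ≤ c`, and `x i` otherwise. -/
def CondV {n : ℕ} (f : (Fin n → L) → L) : Prop :=
  ∀ (x : Fin n → L) (c : L), f (fun _ => ⊥) ≤ c → c ≤ f (fun _ => ⊤) →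
    f x = (f fun i => x i ⊓ c) ⊔ (f fun i => if x i ≤ c then ⊥ else x i)

/-- Condition (V*), the dual of (V): `f(x) = f(x ∨ c̄) ∧ f([x]^c)` for all
`c ∈ [f(0̄), f(1̄)]`, where the `i`-th component of `[x]^c` is `1` if `c ≤ x i`,
and `x i` otherwise. -/
def CondVDual {n : ℕ} (f : (Fin n → L) → L) : Prop :=
  ∀ (x : Fin n → L) (c : L), f (fun _ => ⊥) ≤ c → c ≤ f (fun _ => ⊤) →
    f x = (f fun i => x i ⊔ c) ⊓ (f fun i => if c ≤ x i then ⊤ else x i)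

/-- Condition (I): `f(c̄) = c` for all `c ∈ [f(0̄), f(1̄)]`. -/
def CondI {n : ℕ} (f : (Fin n → L) → L) : Prop :=
  ∀ c : L, f (fun _ => ⊥) ≤ c → c ≤ f (fun _ => ⊤) → f (fun _ => c) = c

/-- A subset `S` of `L` is convex if `a ≤ b ≤ c` with `a, c ∈ S` implies `b ∈ S`. -/
def IsConvexSubset (S : Set L) : Prop :=
  ∀ ⦃a b c : L⦄, a ∈ S → c ∈ S → a ≤ b → b ≤ c → b ∈ S

/-- For every function `g = f_K^a` obtained from `f` by substituting constants for
variables (including `K = ∅`, i.e. `g = f`), the diagonal `δ_g` preserves binary meets.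
Here `δ_{f_K^a}(x) = f(y)` where `y i = a i` for `i ∈ K` and `y i = x` otherwise. -/
def DiagSubstPreservesInf {n : ℕ} (f : (Fin n → L) → L) : Prop :=
  ∀ (K : Set (Fin n)) (a : Fin n → L) (x y : L),
    (f fun i => if i ∈ K then a i else x ⊓ y) =
      (f fun i => if i ∈ K then a i else x) ⊓ (f fun i => if i ∈ K then a i else y)

/-- For every function `g = f_K^a` obtained from `f` by substituting constants for
variables (including `K = ∅`, i.e. `g = f`), the diagonal `δ_g` preserves binary joins. -/
def DiagSubstPreservesSup {n : ℕ} (f : (Fin n → L) → L) : Prop :=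
  ∀ (K : Set (Fin n)) (a : Fin n → L) (x y : L),
    (f fun i => if i ∈ K then a i else x ⊔ y) =
      (f fun i => if i ∈ K then a i else x) ⊔ (f fun i => if i ∈ K then a i else y)

end Defs

/-! Fixing all coordinates but the `k`th, a lattice polynomial becomes a unary one, and unary
polynomials are exactly the clamps `t ↦ a ⊔ t ⊓ b` with `a ≤ b`, which is the median
`med (p ⊥) t (p ⊤)`. Conversely, the median decomposition in the `k`th coordinate expresses `f`
through two functions with one more coordinate frozen, so freezing the coordinates one at a time
reaches constants and builds `f` back up from projections by `med`. -/

variable [DistribLattice L] {n : ℕ} {f : (Fin n → L) → L}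

section Clamp

variable {a b a' b' : L}

theorem med_eq_sup_inf (t : L) (h : a ≤ b) : med a t b = a ⊔ t ⊓ b := by
  rw [med, sup_eq_right.mpr h, inf_assoc, inf_of_le_left (le_sup_right : b ≤ t ⊔ b),
    inf_sup_right, inf_of_le_left h]

theorem clamp_sup_clamp (t : L) :
    (a ⊔ t ⊓ b) ⊔ (a' ⊔ t ⊓ b') = a ⊔ a' ⊔ t ⊓ (b ⊔ b') := by
  rw [inf_sup_left]
  ac_rfl

theorem clamp_inf_clamp (t : L) (h : a ≤ b) (h' : a' ≤ b') :
    (a ⊔ t ⊓ b) ⊓ (a' ⊔ t ⊓ b') = a ⊓ a' ⊔ t ⊓ (b ⊓ b') := by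
  have h₁ : a ⊓ (t ⊓ b') ≤ t ⊓ (b ⊓ b') :=
    (inf_le_inf_right _ h).trans_eq (inf_left_comm ..)
  have h₂ : t ⊓ b ⊓ a' ≤ t ⊓ (b ⊓ b') :=
    (inf_le_inf_left _ h').trans_eq (inf_assoc ..)
  rw [inf_sup_left, inf_sup_right, inf_sup_right, ← inf_inf_distrib_left, sup_of_le_right h₁,
    sup_assoc, sup_of_le_right h₂]

end Clamp

theorem IsLatticePolynomial.update (hf : IsLatticePolynomial f) (x : Fin n → L) (k : Fin n) :
    IsUnaryLatticePolynomial fun t => f (Function.update x k t) := by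
  induction hf with
  | proj j =>
    rcases eq_or_ne j k with rfl | hjk
    · simpa using IsUnaryLatticePolynomial.id
    · simpa [Function.update_of_ne hjk] using IsUnaryLatticePolynomial.const (x j)
  | const c => exact .const c
  | inf _ _ ihf ihg => exact ihf.inf ihg
  | sup _ _ ihf ihg => exact ihf.sup ihg

theorem IsLatticePolynomial.med {g h : (Fin n → L) → L} (hf : IsLatticePolynomial f)
    (hg : IsLatticePolynomial g) (hh : IsLatticePolynomial h) :
    IsLatticePolynomial fun x => med (f x) (g x) (h x) :=
  .inf (.inf (.sup hf hg) (.sup hf hh)) (.sup hg hh)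

variable [BoundedOrder L]

theorem IsUnaryLatticePolynomial.exists_eq_clamp {p : L → L} (hp : IsUnaryLatticePolynomial p) :
    ∃ a b, a ≤ b ∧ p = fun t => a ⊔ t ⊓ b := by
  induction hp with
  | id => exact ⟨⊥, ⊤, bot_le, by simp⟩
  | const c => exact ⟨c, c, le_rfl, by simp⟩
  | inf _ _ ihp ihq =>
    obtain ⟨a, b, hab, rfl⟩ := ihp
    obtain ⟨a', b', hab', rfl⟩ := ihq
    exact ⟨a ⊓ a', b ⊓ b', inf_le_inf hab hab', funext fun t => clamp_inf_clamp t hab hab'⟩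
  | sup _ _ ihp ihq =>
    obtain ⟨a, b, hab, rfl⟩ := ihp
    obtain ⟨a', b', hab', rfl⟩ := ihq
    exact ⟨a ⊔ a', b ⊔ b', sup_le_sup hab hab', funext fun t => clamp_sup_clamp t⟩

theorem IsUnaryLatticePolynomial.eq_med {p : L → L} (hp : IsUnaryLatticePolynomial p) (t : L) :
    p t = med (p ⊥) t (p ⊤) := by
  obtain ⟨a, b, hab, rfl⟩ := hp.exists_eq_clamp
  simp only [bot_inf_eq, sup_bot_eq, top_inf_eq, sup_of_le_right hab]
  exact (med_eq_sup_inf t hab).symm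

theorem IsLatticePolynomial.eq_med_update (hf : IsLatticePolynomial f) (x : Fin n → L)
    (k : Fin n) :
    f x = _root_.med (f (Function.update x k ⊥)) (x k) (f (Function.update x k ⊤)) := by
  simpa using (hf.update x k).eq_med (x k)

theorem isLatticePolynomial_piecewise_of_eq_med
    (hmed : ∀ (x : Fin n → L) (k : Fin n),
      f x = med (f (Function.update x k ⊥)) (x k) (f (Function.update x k ⊤)))
    (s : Finset (Fin n)) (a : Fin n → L) : IsLatticePolynomial fun x => f (s.piecewise x a) := by
  induction s using Finset.induction_on generalizing a with
  | empty => simpa using IsLatticePolynomial.const (f a)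
  | insert k s hk ih =>
    have hupdate (x : Fin n → L) (c : L) :
        Function.update ((insert k s).piecewise x a) k c =
          s.piecewise x (Function.update a k c) := by
      rw [Finset.piecewise_insert, Function.update_idem, Finset.update_piecewise_of_notMem _ _ _ hk]
    have hf : (fun x => f ((insert k s).piecewise x a)) = fun x =>
        med (f (s.piecewise x (Function.update a k ⊥))) (x k)
          (f (s.piecewise x (Function.update a k ⊤))) := by
      funext x
      rw [hmed _ k, hupdate, hupdate, Finset.piecewise_insert_self]
    rw [hf]
    exact (ih _).med (.proj k) (ih _)

theorem isLatticePolynomial_of_eq_med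
    (hmed : ∀ (x : Fin n → L) (k : Fin n),
      f x = med (f (Function.update x k ⊥)) (x k) (f (Function.update x k ⊤))) :
    IsLatticePolynomial f := by
  simpa using isLatticePolynomial_piecewise_of_eq_med hmed Finset.univ fun _ => ⊥

theorem isLatticePolynomial_iff_med_decomposition_general
    {L : Type*} [DistribLattice L] [BoundedOrder L] {n : ℕ}
    (f : (Fin n → L) → L) :
    IsLatticePolynomial f ↔
      ∀ (x : Fin n → L) (k : Fin n),
        f x = med (f (Function.update x k ⊥)) (x k) (f (Function.update x k ⊤)) :=
  ⟨IsLatticePolynomial.eq_med_update, isLatticePolynomial_of_eq_med⟩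

/-- An `n`-ary function (`n ≥ 1`) on a bounded distributive lattice is a
lattice polynomial function iff it satisfies the median decomposition formula. -/
theorem isLatticePolynomial_iff_med_decomposition
    {L : Type*} [DistribLattice L] [BoundedOrder L] {n : ℕ} (hn : 1 ≤ n)
    (f : (Fin n → L) → L) :
    IsLatticePolynomial f ↔
      ∀ (x : Fin n → L) (k : Fin n),
        f x = med (f (Function.update x k ⊥)) (x k) (f (Function.update x k ⊤)) :=
  isLatticePolynomial_iff_med_decomposition_general f
end

section
/- Let L be a bounded distributive lattice and n ≥ 1. If a function f : Lⁿ → L satisfies f(x) = med(f(x_k^0), x_k, f(x_k^1)) for every x ∈ Lⁿ and every k with 1 ≤ k ≤ n, then f is order-preserving (monotone with respect to the componentwise order on Lⁿ). -/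
open Classical

variable {L : Type*}

/-! Putting `a` in the `k`th slot of the median decomposition gives
`f(x_k^a) = med(f(x_k^0), a, f(x_k^1))`, which is monotone in `a` because `med` is monotone in
its middle argument. A function monotone in each variable separately is monotone: pass from `x`
to `y ≥ x` by changing one coordinate at a time. -/

open Function Finset

theorem monotone_of_forall_monotone_update {ι β : Type*} [Fintype ι] [DecidableEq ι]
    {π : ι → Type*} [∀ i, Preorder (π i)] [Preorder β] {f : (∀ i, π i) → β}
    (hf : ∀ x i, Monotone fun a => f (update x i a)) : Monotone f := by
  intro x y hxy
  have key : ∀ s : Finset ι, f x ≤ f (s.piecewise y x) := by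
    intro s
    induction s using Finset.induction_on with
    | empty => simp
    | insert i s hi ih =>
      calc f x ≤ f (s.piecewise y x) := ih
        _ = f (update (s.piecewise y x) i (x i)) := by
          rw [update_eq_self_iff.2 (piecewise_eq_of_notMem s y x hi).symm]
        _ ≤ f (update (s.piecewise y x) i (y i)) := hf _ i (hxy i)
        _ = f ((insert i s).piecewise y x) := by rw [piecewise_insert]
  simpa using key univ

section Median

variable [DistribLattice L]

theorem monotone_med_middle (a c : L) : Monotone fun b => med a b c :=
  fun _ _ hb => by dsimp only [med]; gcongr

theorem monotone_update_of_med_decomposition [BoundedOrder L] {ι : Type*} [DecidableEq ι]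
    {f : (ι → L) → L}
    (hmed : ∀ x k, f x = med (f (update x k ⊥)) (x k) (f (update x k ⊤)))
    (x : ι → L) (k : ι) :
    Monotone fun a => f (update x k a) := by
  have hslice (a : L) : f (update x k a) = med (f (update x k ⊥)) a (f (update x k ⊤)) := by
    simpa only [update_idem, update_self] using hmed (update x k a) k
  intro a b hab
  calc f (update x k a) = med (f (update x k ⊥)) a (f (update x k ⊤)) := hslice a
    _ ≤ med (f (update x k ⊥)) b (f (update x k ⊤)) := monotone_med_middle _ _ hab
    _ = f (update x k b) := (hslice b).symm

end Median

theorem monotone_of_med_decomposition_general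
    {L : Type*} [DistribLattice L] [BoundedOrder L] {n : ℕ}
    (f : (Fin n → L) → L)
    (hmed : ∀ (x : Fin n → L) (k : Fin n),
      f x = med (f (Function.update x k ⊥)) (x k) (f (Function.update x k ⊤))) :
    Monotone f :=
  monotone_of_forall_monotone_update (monotone_update_of_med_decomposition hmed)

/-- A function satisfying the median decomposition formula is order-preserving. -/
theorem monotone_of_med_decomposition
    {L : Type*} [DistribLattice L] [BoundedOrder L] {n : ℕ} (hn : 1 ≤ n)
    (f : (Fin n → L) → L)
    (hmed : ∀ (x : Fin n → L) (k : Fin n),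
      f x = med (f (Function.update x k ⊥)) (x k) (f (Function.update x k ⊤))) :
    Monotone f :=
  monotone_of_med_decomposition_general f hmed
end

section
/- Let L be a bounded distributive lattice, n ≥ 1, and let f : Lⁿ → L be an order-preserving function. Then f is a lattice polynomial function if and only if f satisfies condition (H) and condition (H*). -/
open Classical

variable {L : Type*}

/-!
Induction on a polynomial `p` gives `p (x ⊓ c) = (p x ⊓ c) ⊔ p ⊥` and, dually,
`p (x ⊔ c) = (p x ⊔ c) ⊓ p ⊤`, whence (H) and (H*). Conversely, write `e_S` for the
characteristic vector of `S ⊆ Fin n`. Applying (H) and (H*) to constants moved into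
`[f ⊥, f ⊤]`, a monotone `f` satisfies `f e_S ⊓ ⨅_{i ∈ S} x i ≤ f x ≤ f e_Sᶜ ⊔ ⨆_{i ∈ S} x i`
for every `S`. Distributing the conjunctive normal form on the right shows that it lies below
the disjunctive normal form `⨆_S f e_S ⊓ ⨅_{i ∈ S} x i`, so `f` equals this polynomial.
-/

theorem Finset.inf_compl_sup_le_sup_inf {α ι : Type*} [DistribLattice α] [BoundedOrder α]
    [Fintype ι] [DecidableEq ι] (a : Finset ι → α) (x : ι → α) :
    (univ.inf fun S => a Sᶜ ⊔ S.sup x) ≤ univ.sup fun T => a T ⊓ T.inf x := by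
  have h_sup : ∀ S : Finset ι, a Sᶜ ⊔ S.sup x = (insertNone S).sup (Option.elim · (a Sᶜ) x) := by
    intro S
    simp [insertNone, sup_map, Function.comp_def]
  -- A choice function `φ` picks from each factor either `a Sᶜ` or some `x i` with `i ∈ S`.
  -- If `T` is the set of picked indices, the factor at `Tᶜ` can only have picked `a T`.
  simp only [h_sup, inf_sup, Finset.sup_le_iff, mem_pi]
  intro φ hφ
  let T := univ.filter fun i => ∃ S, φ S (mem_univ S) = some i
  have hφT : φ Tᶜ (mem_univ _) = none := by
    refine Option.eq_none_iff_forall_ne_some.mpr fun j hj => ?_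
    have hjT : j ∈ T := mem_filter.mpr ⟨mem_univ j, Tᶜ, hj⟩
    exact mem_compl.mp (mem_insertNone.mp (hj ▸ hφ Tᶜ (mem_univ _)) j rfl) hjT
  refine le_trans (le_inf ?_ ?_) (le_sup (f := fun T => a T ⊓ T.inf x) (mem_univ T))
  · refine (inf_le (mem_attach _ ⟨Tᶜ, mem_univ _⟩)).trans ?_
    simp [hφT]
  · refine Finset.le_inf fun i hi => ?_
    obtain ⟨S, hS⟩ := (mem_filter.mp hi).2
    refine (inf_le (mem_attach _ ⟨S, mem_univ _⟩)).trans ?_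
    simp [hS]

theorem inf_sup_inf_sup_of_le {α : Type*} [DistribLattice α] {a b c p q : α} (hp : p ≤ a)
    (hq : q ≤ b) : (a ⊓ c ⊔ p) ⊓ (b ⊓ c ⊔ q) = a ⊓ b ⊓ c ⊔ p ⊓ q := by
  rw [inf_sup_assoc_of_le _ hp, inf_sup_assoc_of_le _ hq, inf_inf_inf_comm, ← sup_inf_left,
    inf_sup_assoc_of_le _ (inf_le_inf hp hq)]

namespace IsLatticePolynomial

variable [DistribLattice L] {n : ℕ} {f : (Fin n → L) → L}

protected theorem monotone (hf : IsLatticePolynomial f) : Monotone f := by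
  induction hf with
  | proj k => exact fun x y hxy => hxy k
  | const c => exact monotone_const
  | inf _ _ ihf ihg => exact ihf.inf ihg
  | sup _ _ ihf ihg => exact ihf.sup ihg

theorem dual (hf : IsLatticePolynomial f) :
    IsLatticePolynomial (L := Lᵒᵈ) f := by
  induction hf with
  | proj k => exact proj k
  | const c => exact const (L := Lᵒᵈ) c
  | inf _ _ ihf ihg => exact sup ihf ihg
  | sup _ _ ihf ihg => exact inf ihf ihg

variable [BoundedOrder L]

theorem map_inf_const (hf : IsLatticePolynomial f) (x : Fin n → L) (c : L) :
    (f fun i => x i ⊓ c) = f x ⊓ c ⊔ f (fun _ => ⊥) := by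
  induction hf with
  | proj k => simp
  | const d => simp
  | inf hf hg ihf ihg =>
    dsimp only
    rw [ihf, ihg]
    exact inf_sup_inf_sup_of_le (hf.monotone fun _ => bot_le) (hg.monotone fun _ => bot_le)
  | sup _ _ ihf ihg => dsimp only; rw [ihf, ihg, inf_sup_right, sup_sup_sup_comm]

theorem condH (hf : IsLatticePolynomial f) : CondH f := fun x c hc _ => by
  rw [hf.map_inf_const, sup_eq_left]
  exact le_inf (hf.monotone fun _ => bot_le) hc

theorem condHDual (hf : IsLatticePolynomial f) : CondHDual f :=
  fun x c hc₀ hc₁ => hf.dual.condH x c hc₁ hc₀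

theorem finset_sup {ι : Type*} (s : Finset ι) {F : ι → (Fin n → L) → L}
    (hF : ∀ i ∈ s, IsLatticePolynomial (F i)) : IsLatticePolynomial fun x => s.sup (F · x) := by
  induction s using Finset.cons_induction with
  | empty => exact const ⊥
  | cons i s _ ih =>
    simp only [Finset.sup_cons]
    exact sup (hF i (Finset.mem_cons_self i s)) (ih fun j hj => hF j (Finset.mem_cons_of_mem hj))

theorem finset_inf {ι : Type*} (s : Finset ι) {F : ι → (Fin n → L) → L}
    (hF : ∀ i ∈ s, IsLatticePolynomial (F i)) : IsLatticePolynomial fun x => s.inf (F · x) :=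
  (finset_sup (L := Lᵒᵈ) s fun i hi => (hF i hi).dual).dual

end IsLatticePolynomial

def charVec {ι : Type*} [DecidableEq ι] [Bot L] [Top L] (S : Finset ι) : ι → L :=
  fun i => if i ∈ S then ⊤ else ⊥

section CondH

variable [DistribLattice L] [BoundedOrder L] {n : ℕ} {f : (Fin n → L) → L}

theorem CondH.map_inf_le_of_inf_le (hH : CondH f) (hHd : CondHDual f) (hf : Monotone f)
    {x y : Fin n → L} {a : L} (hyx : ∀ i, y i ⊓ a ≤ x i) : f y ⊓ a ≤ f x := by
  have hbt : f (fun _ => ⊥) ≤ f (fun _ => ⊤) := hf fun _ => bot_le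
  -- `a` moved into the interval `[f ⊥, f ⊤]`, where (H) applies
  set c := f (fun _ => ⊤) ⊓ a ⊔ f (fun _ => ⊥)
  calc f y ⊓ a ≤ f y ⊓ c :=
        le_inf inf_le_left (le_sup_of_le_left (inf_le_inf_right _ (hf fun _ => le_top)))
    _ = f (fun i => y i ⊓ c) := (hH y c le_sup_right (sup_le inf_le_left hbt)).symm
    _ ≤ f (fun i => x i ⊔ f (fun _ => ⊥)) := hf fun i => by
        rw [inf_sup_left]
        exact sup_le_sup ((inf_le_inf_left _ inf_le_right).trans (hyx i)) inf_le_right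
    _ = f x := by rw [hHd x _ le_rfl hbt, sup_eq_left.mpr (hf fun _ => bot_le)]

theorem CondHDual.map_le_sup_of_le_sup (hHd : CondHDual f) (hH : CondH f) (hf : Monotone f)
    {x y : Fin n → L} {a : L} (hxy : ∀ i, x i ≤ y i ⊔ a) : f x ≤ f y ⊔ a :=
  CondH.map_inf_le_of_inf_le (L := Lᵒᵈ) (fun x c h₀ h₁ => hHd x c h₁ h₀)
    (fun x c h₀ h₁ => hH x c h₁ h₀) (fun _ _ h => hf h) hxy

theorem CondH.eq_sup_inf_charVec (hH : CondH f) (hHd : CondHDual f) (hf : Monotone f)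
    (x : Fin n → L) : f x = Finset.univ.sup fun S => f (charVec S) ⊓ S.inf x := by
  refine le_antisymm ?_ (Finset.sup_le fun S _ => hH.map_inf_le_of_inf_le hHd hf fun i => ?_)
  · calc f x ≤ Finset.univ.inf fun S => f (charVec Sᶜ) ⊔ S.sup x :=
          Finset.le_inf fun S _ => hHd.map_le_sup_of_le_sup hH hf fun i => by
            by_cases hi : i ∈ S
            · simpa [charVec, hi] using Finset.le_sup hi
            · simp [charVec, hi]
      _ ≤ _ := Finset.inf_compl_sup_le_sup_inf (fun T => f (charVec T)) x
  · by_cases hi : i ∈ S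
    · simpa [charVec, hi] using Finset.inf_le hi
    · simp [charVec, hi]

end CondH

theorem isLatticePolynomial_iff_condH_condHDual_general
    {L : Type*} [DistribLattice L] [BoundedOrder L] {n : ℕ}
    (f : (Fin n → L) → L) (hf : Monotone f) :
    IsLatticePolynomial f ↔ CondH f ∧ CondHDual f := by
  refine ⟨fun hp => ⟨hp.condH, hp.condHDual⟩, fun ⟨hH, hHd⟩ => ?_⟩
  rw [funext (hH.eq_sup_inf_charVec hHd hf)]
  exact .finset_sup _ fun S _ =>
    .inf (.const _) (.finset_inf S fun i _ => .proj i)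

/-- An order-preserving function `f : Lⁿ → L` (`n ≥ 1`) is a lattice
polynomial function iff it satisfies condition (H) and its dual (H*). -/
theorem isLatticePolynomial_iff_condH_condHDual
    {L : Type*} [DistribLattice L] [BoundedOrder L] {n : ℕ} (hn : 1 ≤ n)
    (f : (Fin n → L) → L) (hf : Monotone f) :
    IsLatticePolynomial f ↔ CondH f ∧ CondHDual f :=
  isLatticePolynomial_iff_condH_condHDual_general f hf
end

section
/- Let L be a bounded distributive lattice, n ≥ 1, and let f : Lⁿ → L be an order-preserving function. Then f is a lattice polynomial function if and only if: for every function g obtained from f by substituting constants for variables, the diagonal δ_g preserves ∧ and ∨, and δ_f preserves ∧ and ∨, and f satisfies condition (V), its dual condition (V*), and condition (I). -/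
open Classical

variable {L : Type*}

/-!
For monotone `f`, conditions (H) and (H*), which only allow constants `c ∈ [f 0̄, f 1̄]`, already
give `f (y ∨ c̄) ≤ f y ∨ c` and `f y ∧ c ≤ f (y ∧ c̄)` for every `c ∈ L`: clamp `c` into the range.
These two inequalities yield the median decomposition `f x = f (x[k ↦ 0]) ∨ (x k ∧ f (x[k ↦ 1]))`,
which builds `f` from projections and constants one variable at a time. Conversely, the two
inequalities are preserved by pointwise `∧` and `∨`, so every polynomial function satisfies them,
and (V), (V*), (I) and the diagonal conditions follow from them and monotonicity.
To get (H) from (V*), (I) and the diagonal condition, move the coordinates from `x i` to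
`x i ∧ c` one at a time: the diagonal condition for the function of that one variable splits
`f (y[k ↦ y k ∧ c])` as `f y ∧ f (y[k ↦ c])`, and (V*) bounds the second factor below by
`f (y[k ↦ 1]) ∧ c`. (H*) is dual.
-/

open Function

/-- The nontrivial halves of (H*) and (H) for a monotone `f`, required for every `c ∈ L`. -/
structure IsWeaklyHomogeneous [Lattice L] {ι : Type*} (f : (ι → L) → L) : Prop where
  apply_sup_const_le : ∀ (y : ι → L) (c : L), f (fun i => y i ⊔ c) ≤ f y ⊔ c
  inf_const_le_apply : ∀ (y : ι → L) (c : L), f y ⊓ c ≤ f fun i => y i ⊓ c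

namespace IsWeaklyHomogeneous

section Lattice

variable [Lattice L] {ι : Type*} {f : (ι → L) → L}

theorem apply_le_sup (hw : IsWeaklyHomogeneous f) (hf : Monotone f) {x y : ι → L} {c : L}
    (hxy : ∀ i, x i ≤ y i ⊔ c) : f x ≤ f y ⊔ c :=
  (hf hxy).trans (hw.apply_sup_const_le y c)

theorem inf_le_apply (hw : IsWeaklyHomogeneous f) (hf : Monotone f) {x y : ι → L} {c : L}
    (hxy : ∀ i, y i ⊓ c ≤ x i) : f y ⊓ c ≤ f x :=
  (hw.inf_const_le_apply y c).trans (hf hxy)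

end Lattice

theorem apply_eq_sup_inf_update [DistribLattice L] [BoundedOrder L] {ι : Type*} [DecidableEq ι]
    {f : (ι → L) → L} (hw : IsWeaklyHomogeneous f) (hf : Monotone f) (x : ι → L) (k : ι) :
    f x = f (update x k ⊥) ⊔ (x k ⊓ f (update x k ⊤)) := by
  have hbot : f (update x k ⊥) ≤ f x := hf (update_le_iff.2 ⟨bot_le, fun _ _ => le_rfl⟩)
  have htop : f x ≤ f (update x k ⊤) := hf (le_update_iff.2 ⟨le_top, fun _ _ => le_rfl⟩)
  have upper : f x ≤ f (update x k ⊥) ⊔ x k := hw.apply_le_sup hf fun i => by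
    rcases eq_or_ne i k with rfl | hik
    · exact le_sup_right
    · exact le_sup_of_le_left (update_of_ne hik _ _).ge
  have lower : f (update x k ⊤) ⊓ x k ≤ f x := hw.inf_le_apply hf fun i => by
    rcases eq_or_ne i k with rfl | hik
    · exact inf_le_right
    · exact inf_le_of_left_le (update_of_ne hik _ _).le
  refine le_antisymm ?_ (sup_le hbot (inf_comm (x k) _ ▸ lower))
  calc f x ≤ (f (update x k ⊥) ⊔ x k) ⊓ f (update x k ⊤) := le_inf upper htop
    _ = f (update x k ⊥) ⊔ (x k ⊓ f (update x k ⊤)) := by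
      rw [inf_sup_right, inf_eq_left.2 (hbot.trans htop)]

end IsWeaklyHomogeneous

section Polynomial

variable [DistribLattice L] {n : ℕ} {f : (Fin n → L) → L}

theorem IsLatticePolynomial.isWeaklyHomogeneous (hp : IsLatticePolynomial f) :
    IsWeaklyHomogeneous f := by
  induction hp with
  | proj k => exact ⟨fun _ _ => le_rfl, fun _ _ => le_rfl⟩
  | const d => exact ⟨fun _ _ => le_sup_left, fun _ _ => inf_le_left⟩
  | inf _ _ ihg ihh =>
    refine ⟨fun y c => ?_, fun y c => ?_⟩
    · exact (inf_le_inf (ihg.1 y c) (ihh.1 y c)).trans (sup_inf_right _ _ _).ge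
    · exact (inf_inf_distrib_right _ _ _).le.trans (inf_le_inf (ihg.2 y c) (ihh.2 y c))
  | sup _ _ ihg ihh =>
    refine ⟨fun y c => ?_, fun y c => ?_⟩
    · exact (sup_le_sup (ihg.1 y c) (ihh.1 y c)).trans (sup_sup_distrib_right _ _ _).ge
    · exact (inf_sup_right _ _ _).le.trans (sup_le_sup (ihg.2 y c) (ihh.2 y c))

namespace IsWeaklyHomogeneous

theorem diagSubstPreservesInf (hw : IsWeaklyHomogeneous f) (hf : Monotone f) :
    DiagSubstPreservesInf f := by
  intro K a x y
  set g : L → L := fun z => f fun i => if i ∈ K then a i else z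
  change g (x ⊓ y) = g x ⊓ g y
  have hg : Monotone g := fun u v huv => hf fun i => by dsimp only; split_ifs <;> simp [huv]
  have upper : g x ≤ g (x ⊓ y) ⊔ x := hw.apply_le_sup hf fun i => by split_ifs <;> simp
  have lower : g y ⊓ x ≤ g (x ⊓ y) := hw.inf_le_apply hf fun i => by
    split_ifs <;> simp [inf_comm]
  refine le_antisymm (le_inf (hg inf_le_left) (hg inf_le_right)) ?_
  calc g x ⊓ g y ≤ (g (x ⊓ y) ⊔ x) ⊓ g y := inf_le_inf_right _ upper
    _ = g (x ⊓ y) ⊓ g y ⊔ x ⊓ g y := inf_sup_right _ _ _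
    _ ≤ g (x ⊓ y) := sup_le inf_le_left (inf_comm x (g y) ▸ lower)

theorem diagSubstPreservesSup (hw : IsWeaklyHomogeneous f) (hf : Monotone f) :
    DiagSubstPreservesSup f := by
  intro K a x y
  set g : L → L := fun z => f fun i => if i ∈ K then a i else z
  change g (x ⊔ y) = g x ⊔ g y
  have hg : Monotone g := fun u v huv => hf fun i => by dsimp only; split_ifs <;> simp [huv]
  have upper : g (x ⊔ y) ≤ g y ⊔ x := hw.apply_le_sup hf fun i => by
    split_ifs <;> simp [sup_comm]
  have lower : g (x ⊔ y) ⊓ x ≤ g x := hw.inf_le_apply hf fun i => by split_ifs <;> simp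
  refine le_antisymm ?_ (sup_le (hg le_sup_left) (hg le_sup_right))
  calc g (x ⊔ y) ≤ (g y ⊔ x) ⊓ g (x ⊔ y) := le_inf upper le_rfl
    _ = g y ⊓ g (x ⊔ y) ⊔ x ⊓ g (x ⊔ y) := inf_sup_right _ _ _
    _ ≤ g x ⊔ g y := sup_le (le_sup_of_le_right inf_le_left)
      (le_sup_of_le_left (inf_comm (g (x ⊔ y)) x ▸ lower))

variable [BoundedOrder L]

theorem condI (hw : IsWeaklyHomogeneous f) : CondI f := fun c h0 h1 =>
  le_antisymm
    (by simpa [sup_eq_right.2 h0] using hw.apply_sup_const_le (fun _ => ⊥) c)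
    (by simpa [inf_eq_right.2 h1] using hw.inf_const_le_apply (fun _ => ⊤) c)

theorem condV (hw : IsWeaklyHomogeneous f) (hf : Monotone f) : CondV f := by
  intro x c _ _
  set xc : Fin n → L := fun i => if x i ≤ c then ⊥ else x i
  have hxc : xc ≤ x := fun i => by dsimp only [xc]; split_ifs <;> simp
  have upper : f x ≤ f xc ⊔ c := hw.apply_le_sup hf fun i => by
    dsimp only [xc]; split_ifs with h <;> simp [h]
  refine le_antisymm ?_ (sup_le (hf fun i => inf_le_left) (hf hxc))
  calc f x ≤ f x ⊓ (f xc ⊔ c) := le_inf le_rfl upper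
    _ = f x ⊓ f xc ⊔ f x ⊓ c := inf_sup_left _ _ _
    _ ≤ (f fun i => x i ⊓ c) ⊔ f xc :=
      sup_le (le_sup_of_le_right inf_le_right) (le_sup_of_le_left (hw.inf_const_le_apply x c))

theorem condVDual (hw : IsWeaklyHomogeneous f) (hf : Monotone f) : CondVDual f := by
  intro x c _ _
  set xc : Fin n → L := fun i => if c ≤ x i then ⊤ else x i
  have hxc : x ≤ xc := fun i => by dsimp only [xc]; split_ifs <;> simp
  have lower : f xc ⊓ c ≤ f x := hw.inf_le_apply hf fun i => by
    dsimp only [xc]; split_ifs with h <;> simp [h]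
  refine le_antisymm (le_inf (hf fun i => le_sup_left) (hf hxc)) ?_
  calc (f fun i => x i ⊔ c) ⊓ f xc ≤ (f x ⊔ c) ⊓ f xc :=
        inf_le_inf_right _ (hw.apply_sup_const_le x c)
    _ = f x ⊓ f xc ⊔ c ⊓ f xc := inf_sup_right _ _ _
    _ ≤ f x := sup_le inf_le_left (inf_comm c (f xc) ▸ lower)

end IsWeaklyHomogeneous

end Polynomial

section CoordinateInduction

variable [Lattice L] {ι : Type*} [Fintype ι] [DecidableEq ι] {f : (ι → L) → L} {c : L}

theorem inf_le_apply_inf_const_of_forall_update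
    (step : ∀ y k, f y ⊓ c ≤ f (update y k (y k ⊓ c))) (x : ι → L) :
    f x ⊓ c ≤ f fun i => x i ⊓ c := by
  suffices ∀ T : Finset ι, f x ⊓ c ≤ f fun i => if i ∈ T then x i ⊓ c else x i by
    simpa using this Finset.univ
  intro T
  induction T using Finset.induction_on with
  | empty => simp
  | insert k T hk ih =>
    set y : ι → L := fun i => if i ∈ T then x i ⊓ c else x i
    have hy : (fun i => if i ∈ insert k T then x i ⊓ c else x i) = update y k (y k ⊓ c) := by
      funext i
      rcases eq_or_ne i k with rfl | hik <;> simp [y, *]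
    rw [hy]
    exact (le_inf ih inf_le_right).trans (step y k)

theorem apply_sup_const_le_of_forall_update
    (step : ∀ y k, f (update y k (y k ⊔ c)) ≤ f y ⊔ c) (x : ι → L) :
    (f fun i => x i ⊔ c) ≤ f x ⊔ c := by
  suffices ∀ T : Finset ι, (f fun i => if i ∈ T then x i ⊔ c else x i) ≤ f x ⊔ c by
    simpa using this Finset.univ
  intro T
  induction T using Finset.induction_on with
  | empty => simp
  | insert k T hk ih =>
    set y : ι → L := fun i => if i ∈ T then x i ⊔ c else x i
    have hy : (fun i => if i ∈ insert k T then x i ⊔ c else x i) = update y k (y k ⊔ c) := by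
      funext i
      rcases eq_or_ne i k with rfl | hik <;> simp [y, *]
    rw [hy]
    exact (step y k).trans (sup_le ih le_sup_right)

end CoordinateInduction

theorem update_eq_ite_mem_compl_singleton {ι α : Type*} [DecidableEq ι] (y : ι → α) (k : ι)
    (z : α) : update y k z = fun i => if i ∈ ({k}ᶜ : Set ι) then y i else z :=
  funext fun i => by rcases eq_or_ne i k with rfl | hik <;> simp [*]

section Conditions

variable [DistribLattice L] {n : ℕ} {f : (Fin n → L) → L}

theorem DiagSubstPreservesInf.apply_update_inf (hd : DiagSubstPreservesInf f)
    (y : Fin n → L) (k : Fin n) (u v : L) :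
    f (update y k (u ⊓ v)) = f (update y k u) ⊓ f (update y k v) := by
  simp only [update_eq_ite_mem_compl_singleton]
  -- `hd` decides `i ∈ {k}ᶜ` classically, the rewritten goal by `Set.decidableCompl`
  convert hd {k}ᶜ y u v

theorem DiagSubstPreservesSup.apply_update_sup (hd : DiagSubstPreservesSup f)
    (y : Fin n → L) (k : Fin n) (u v : L) :
    f (update y k (u ⊔ v)) = f (update y k u) ⊔ f (update y k v) := by
  simp only [update_eq_ite_mem_compl_singleton]
  convert hd {k}ᶜ y u v

variable [BoundedOrder L]

theorem CondVDual.apply_update_top_inf_le (hV : CondVDual f) (hf : Monotone f) (hI : CondI f)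
    {c : L} (h0 : f (fun _ => ⊥) ≤ c) (h1 : c ≤ f (fun _ => ⊤)) (y : Fin n → L) (k : Fin n) :
    f (update y k ⊤) ⊓ c ≤ f (update y k c) := by
  rw [hV (update y k c) c h0 h1, inf_comm]
  refine inf_le_inf ((hI c h0 h1).ge.trans (hf fun i => le_sup_right)) (hf fun i => ?_)
  rcases eq_or_ne i k with rfl | hik
  · simp
  · simp only [update_of_ne hik]
    split_ifs <;> simp

theorem CondV.apply_update_le_sup (hV : CondV f) (hf : Monotone f) (hI : CondI f)
    {c : L} (h0 : f (fun _ => ⊥) ≤ c) (h1 : c ≤ f (fun _ => ⊤)) (y : Fin n → L) (k : Fin n) :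
    f (update y k c) ≤ f (update y k ⊥) ⊔ c := by
  rw [hV (update y k c) c h0 h1, sup_comm]
  refine sup_le_sup (hf fun i => ?_) ((hf fun i => inf_le_right).trans (hI c h0 h1).le)
  rcases eq_or_ne i k with rfl | hik
  · simp
  · simp only [update_of_ne hik]
    split_ifs <;> simp

theorem condH_of_diagSubstPreservesInf (hf : Monotone f) (hd : DiagSubstPreservesInf f)
    (hV : CondVDual f) (hI : CondI f) : CondH f := by
  intro x c h0 h1
  refine le_antisymm
    (le_inf (hf fun i => inf_le_left) ((hf fun i => inf_le_right).trans (hI c h0 h1).le)) ?_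
  refine inf_le_apply_inf_const_of_forall_update (fun y k => ?_) x
  rw [hd.apply_update_inf, update_eq_self]
  have hy : f y ≤ f (update y k ⊤) := hf (le_update_iff.2 ⟨le_top, fun _ _ => le_rfl⟩)
  exact le_inf inf_le_left
    ((inf_le_inf_right c hy).trans (hV.apply_update_top_inf_le hf hI h0 h1 y k))

theorem condHDual_of_diagSubstPreservesSup (hf : Monotone f) (hd : DiagSubstPreservesSup f)
    (hV : CondV f) (hI : CondI f) : CondHDual f := by
  intro x c h0 h1
  refine le_antisymm ?_
    (sup_le (hf fun i => le_sup_left) ((hI c h0 h1).ge.trans (hf fun i => le_sup_right)))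
  refine apply_sup_const_le_of_forall_update (fun y k => ?_) x
  rw [hd.apply_update_sup, update_eq_self]
  have hy : f (update y k ⊥) ≤ f y := hf (update_le_iff.2 ⟨bot_le, fun _ _ => le_rfl⟩)
  exact sup_le le_sup_left
    ((hV.apply_update_le_sup hf hI h0 h1 y k).trans (sup_le_sup_right hy c))

theorem CondH.isWeaklyHomogeneous (hH : CondH f) (hH' : CondHDual f) (hf : Monotone f) :
    IsWeaklyHomogeneous f := by
  have h01 : f (fun _ => ⊥) ≤ f (fun _ => ⊤) := hf fun _ => bot_le
  have bot_le_apply : ∀ y, f (fun _ => ⊥) ≤ f y := fun y => hf fun _ => bot_le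
  have apply_le_top : ∀ y, f y ≤ f (fun _ => ⊤) := fun y => hf fun _ => le_top
  refine ⟨fun y c => ?_, fun y c => ?_⟩
  · set d := c ⊓ f (fun _ => ⊤) ⊔ f (fun _ => ⊥)
    calc (f fun i => y i ⊔ c) = f fun i => (y i ⊔ c) ⊓ f (fun _ => ⊤) := by
          rw [hH _ _ h01 le_rfl, inf_eq_left.2 (apply_le_top _)]
      _ ≤ f fun i => y i ⊔ d := hf fun i => by
          rw [inf_sup_right]; exact sup_le_sup inf_le_left le_sup_left
      _ = f y ⊔ d := hH' y d le_sup_right (sup_le inf_le_right h01)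
      _ ≤ f y ⊔ c := sup_le le_sup_left (sup_le (le_sup_of_le_right inf_le_left)
          (le_sup_of_le_left (bot_le_apply y)))
  · set d := (c ⊔ f (fun _ => ⊥)) ⊓ f (fun _ => ⊤)
    calc f y ⊓ c ≤ f y ⊓ d := le_inf inf_le_left
          (le_inf (inf_le_right.trans le_sup_left) (inf_le_left.trans (apply_le_top y)))
      _ = f fun i => y i ⊓ d := (hH y d (le_inf le_sup_right h01) inf_le_right).symm
      _ ≤ f fun i => y i ⊓ c ⊔ f (fun _ => ⊥) := hf fun i => by
          rw [← inf_assoc, inf_sup_left]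
          exact inf_le_left.trans (sup_le_sup_left inf_le_right _)
      _ = f fun i => y i ⊓ c := by
          rw [hH' _ _ le_rfl h01, sup_eq_left.2 (bot_le_apply _)]

theorem isLatticePolynomial_of_apply_eq_sup_inf_update
    (h : ∀ x k, f x = f (update x k ⊥) ⊔ (x k ⊓ f (update x k ⊤))) :
    IsLatticePolynomial f := by
  suffices ∀ (T : Finset (Fin n)) (b : Fin n → L),
      IsLatticePolynomial fun x => f fun i => if i ∈ T then x i else b i by
    simpa using this Finset.univ ⊥
  intro T
  induction T using Finset.induction_on with
  | empty => simpa using fun b => IsLatticePolynomial.const (f b)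
  | insert k T hk ih =>
    intro b
    have hupdate : ∀ (x : Fin n → L) (v : L),
        update (fun i => if i ∈ insert k T then x i else b i) k v =
          fun i => if i ∈ T then x i else update b k v i := fun x v => funext fun i => by
      rcases eq_or_ne i k with rfl | hik <;> simp [*]
    have hdecomp : (fun x => f fun i => if i ∈ insert k T then x i else b i) =
        fun x : Fin n → L => (f fun i => if i ∈ T then x i else update b k ⊥ i) ⊔
          (x k ⊓ f fun i => if i ∈ T then x i else update b k ⊤ i) := funext fun x => by
      rw [h _ k, hupdate, hupdate, if_pos (Finset.mem_insert_self k T)]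
    rw [hdecomp]
    exact .sup (ih _) (.inf (.proj k) (ih _))

end Conditions

theorem isLatticePolynomial_iff_diag_condV_condVDual_condI_general
    {L : Type*} [DistribLattice L] [BoundedOrder L] {n : ℕ}
    (f : (Fin n → L) → L) (hf : Monotone f) :
    IsLatticePolynomial f ↔
      (DiagSubstPreservesInf f ∧ DiagSubstPreservesSup f) ∧
      CondV f ∧ CondVDual f ∧ CondI f := by
  constructor
  · intro hp
    have hw := hp.isWeaklyHomogeneous
    exact ⟨⟨hw.diagSubstPreservesInf hf, hw.diagSubstPreservesSup hf⟩,
      hw.condV hf, hw.condVDual hf, hw.condI⟩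
  · rintro ⟨⟨hdi, hds⟩, hV, hVd, hI⟩
    have hH := condH_of_diagSubstPreservesInf hf hdi hVd hI
    have hH' := condHDual_of_diagSubstPreservesSup hf hds hV hI
    exact isLatticePolynomial_of_apply_eq_sup_inf_update
      ((hH.isWeaklyHomogeneous hH' hf).apply_eq_sup_inf_update hf)

/-- An order-preserving function `f : Lⁿ → L` (`n ≥ 1`) is a lattice
polynomial function iff for every function `g` obtained from `f` by substituting
constants for variables (including `f` itself), `δ_g` preserves `∧` and `∨`, and `f`
satisfies conditions (V), (V*), and (I). -/
theorem isLatticePolynomial_iff_diag_condV_condVDual_condI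
    {L : Type*} [DistribLattice L] [BoundedOrder L] {n : ℕ} (hn : 1 ≤ n)
    (f : (Fin n → L) → L) (hf : Monotone f) :
    IsLatticePolynomial f ↔
      (DiagSubstPreservesInf f ∧ DiagSubstPreservesSup f) ∧
      CondV f ∧ CondVDual f ∧ CondI f :=
  isLatticePolynomial_iff_diag_condV_condVDual_condI_general f hf
end

section
/- Let L be a bounded distributive lattice and let f : Lⁿ → L be an order-preserving function. If f satisfies condition (H) or its dual condition (H*), then f satisfies condition (I); moreover, in that case the range {f(x) : x ∈ Lⁿ} coincides with the interval [f(0̄), f(1̄)] and in particular is convex. -/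
open Classical

variable {L : Type*}

/-! Specialising (H) at `x = 1̄` (or (H*) at `x = 0̄`) gives (I) at once. Then every `c` of
`[f(0̄), f(1̄)]` is the value `f(c̄)`, while monotonicity keeps all values inside that interval. -/

theorem Set.OrdConnected.isConvexSubset [DistribLattice L] {S : Set L} (hS : S.OrdConnected) :
    IsConvexSubset S :=
  fun _ _ _ ha hc hab hbc => hS.out ha hc ⟨hab, hbc⟩

section

variable [DistribLattice L] [BoundedOrder L] {n : ℕ} {f : (Fin n → L) → L}

theorem CondH.condI (hH : CondH f) : CondI f := fun c h0 h1 => by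
  simpa [inf_eq_right.mpr h1] using hH (fun _ => ⊤) c h0 h1

theorem CondHDual.condI (hH : CondHDual f) : CondI f := fun c h0 h1 => by
  simpa [sup_eq_right.mpr h0] using hH (fun _ => ⊥) c h0 h1

theorem CondI.range_eq_Icc (hI : CondI f) (hf : Monotone f) :
    Set.range f = Set.Icc (f fun _ => ⊥) (f fun _ => ⊤) := by
  refine Set.Subset.antisymm ?_ fun c hc => ⟨fun _ => c, hI c hc.1 hc.2⟩
  rintro _ ⟨x, rfl⟩
  exact ⟨hf fun _ => bot_le, hf fun _ => le_top⟩

end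

/-- An order-preserving function satisfying (H) or (H*) satisfies (I),
and its range coincides with the interval `[f(0̄), f(1̄)]`; in particular it is convex. -/
theorem condI_and_range_eq_Icc_of_condH_or_condHDual
    {L : Type*} [DistribLattice L] [BoundedOrder L] {n : ℕ}
    (f : (Fin n → L) → L) (hf : Monotone f)
    (h : CondH f ∨ CondHDual f) :
    CondI f ∧
      Set.range f = Set.Icc (f fun _ => ⊥) (f fun _ => ⊤) ∧
      IsConvexSubset (Set.range f) := by
  have hI : CondI f := h.elim CondH.condI CondHDual.condI
  have hR := hI.range_eq_Icc hf
  exact ⟨hI, hR, hR ▸ Set.ordConnected_Icc.isConvexSubset⟩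
end

section
/- Let L be a bounded distributive lattice and let f : Lⁿ → L be an order-preserving function. If f satisfies condition (H) and its dual condition (H*), then the diagonal δ_f preserves ∧ and ∨; in fact δ_f(x) = med(f(0̄), x, f(1̄)) for every x ∈ L. -/
open Classical

variable {L : Type*}

/-! Condition (H) at `x = 1̄` shows that `f` fixes every constant in `[f(0̄), f(1̄)]`. One use
of (H) with `c = f(1̄)` and one of (H*) with `c = f(0̄)` replace `x̄` by the constant
`f(0̄) ∨ (x ∧ f(1̄))` without changing the value of `f`, so `δ_f(x) = f(0̄) ∨ (x ∧ f(1̄))`. By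
distributivity this map preserves `∧` and `∨`, and it is the median since `f(0̄) ≤ f(1̄)`. -/

section DistribLattice

variable [DistribLattice L]

theorem preservesInf_sup_inf_const (a b : L) : PreservesInf fun x => a ⊔ x ⊓ b := by
  intro x y
  dsimp only
  rw [inf_inf_distrib_right, sup_inf_left]

theorem preservesSup_sup_inf_const (a b : L) : PreservesSup fun x => a ⊔ x ⊓ b := by
  intro x y
  dsimp only
  rw [inf_sup_right, sup_sup_distrib_left]

theorem med_eq_sup_inf_of_le {a b : L} (x : L) (hab : a ≤ b) : med a x b = a ⊔ x ⊓ b := by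
  rw [med, sup_eq_right.2 hab, inf_assoc, inf_eq_left.2 (le_sup_right : b ≤ x ⊔ b),
    sup_inf_assoc_of_le x hab]

end DistribLattice

section BoundedDistribLattice

variable [DistribLattice L] [BoundedOrder L] {n : ℕ} {f : (Fin n → L) → L}

theorem diag_eq_sup_inf_of_condH_condHDual (hf : Monotone f) (hH : CondH f)
    (hHd : CondHDual f) (x : L) :
    (f fun _ => x) = (f fun _ => ⊥) ⊔ x ⊓ (f fun _ => ⊤) := by
  set f0 := f fun _ => ⊥
  set f1 := f fun _ => ⊤
  have h01 : f0 ≤ f1 := hf fun _ => bot_le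
  have hc0 : f0 ≤ f0 ⊔ x ⊓ f1 := le_sup_left
  have hc1 : f0 ⊔ x ⊓ f1 ≤ f1 := sup_le h01 inf_le_right
  calc (f fun _ => x)
      = f0 ⊔ (f fun _ => x) ⊓ f1 := by
        rw [inf_eq_left.2 (hf fun _ => le_top), sup_eq_right.2 (hf fun _ => bot_le)]
    _ = f fun _ => f0 ⊔ x ⊓ f1 := by
        rw [← hH (fun _ => x) f1 h01 le_rfl, sup_comm, ← hHd (fun _ => x ⊓ f1) f0 le_rfl h01]
        simp only [sup_comm]
    _ = f0 ⊔ x ⊓ f1 := hH.condI _ hc0 hc1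

end BoundedDistribLattice

/-- If an order-preserving function satisfies (H) and (H*), then its
diagonal `δ_f` preserves `∧` and `∨`; in fact `δ_f(x) = med(f(0̄), x, f(1̄))`. -/
theorem diag_preserves_of_condH_condHDual
    {L : Type*} [DistribLattice L] [BoundedOrder L] {n : ℕ}
    (f : (Fin n → L) → L) (hf : Monotone f)
    (hH : CondH f) (hHd : CondHDual f) :
    PreservesInf (fun x : L => f fun _ => x) ∧
      PreservesSup (fun x : L => f fun _ => x) ∧
      (∀ x : L, (f fun _ => x) = med (f fun _ => ⊥) x (f fun _ => ⊤)) := by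
  have hdiag : (fun x : L => f fun _ => x) = fun x => (f fun _ => ⊥) ⊔ x ⊓ (f fun _ => ⊤) :=
    funext (diag_eq_sup_inf_of_condH_condHDual hf hH hHd)
  have h01 : (f fun _ => ⊥) ≤ f fun _ => ⊤ := hf fun _ => bot_le
  refine ⟨hdiag ▸ preservesInf_sup_inf_const _ _, hdiag ▸ preservesSup_sup_inf_const _ _,
    fun x => ?_⟩
  rw [med_eq_sup_inf_of_le x h01, congrFun hdiag x]
end

section
/- Let L be a bounded distributive lattice and let f : Lⁿ → L be an order-preserving function. If f satisfies condition (H) and its dual condition (H*), then f satisfies condition (V) and its dual condition (V*); moreover, for every function g obtained from f by substituting constants for variables, the diagonal δ_g preserves ∧ and ∨. -/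
open Classical

variable {L : Type*}

/-!
Clamping a constant `c` into `[f 0̄, f 1̄]` shows that (H) and (H*) give `f (x ∨ c̄) ≤ f x ∨ c` and
`f x ∧ c ≤ f (x ∧ c̄)` for every `c ∈ L`. As `x ≤ [x]_c ∨ c̄`, the first one yields (V). For a
diagonal `g` of a substitution instance of `f` they give `g t ≤ g 0 ∨ t` and `g 1 ∧ t ≤ g t`,
which in a distributive lattice force `g t = g 0 ∨ (g 1 ∧ t)`, a map preserving `∧` and `∨`.
The dual statements follow by passing to `Lᵒᵈ`.
-/

section Lattice

variable [DistribLattice L] {n : ℕ}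

theorem eq_sup_inf_of_le_sup_of_inf_le {p q t y : L} (hpy : p ≤ y) (hyq : y ≤ q)
    (hy : y ≤ p ⊔ t) (ht : q ⊓ t ≤ y) : y = p ⊔ q ⊓ t :=
  le_antisymm
    (calc y ≤ q ⊓ (p ⊔ t) := le_inf hyq hy
      _ = q ⊓ p ⊔ q ⊓ t := inf_sup_left q p t
      _ ≤ p ⊔ q ⊓ t := sup_le_sup_right inf_le_right _)
    (sup_le hpy ht)

theorem preservesInf_sup_inf (p q : L) : PreservesInf fun t => p ⊔ q ⊓ t := fun x y =>
  (congrArg (p ⊔ ·) (inf_inf_distrib_left q x y)).trans (sup_inf_left _ _ _)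

def dualMap (f : (Fin n → L) → L) : (Fin n → Lᵒᵈ) → Lᵒᵈ :=
  fun x => OrderDual.toDual (f fun i => OrderDual.ofDual (x i))

theorem Monotone.dualMap {f : (Fin n → L) → L} (hf : Monotone f) : Monotone (dualMap f) :=
  fun _ _ hxy => hf fun i => hxy i

theorem diagSubstPreservesSup_of_diagSubstPreservesInf_dualMap {f : (Fin n → L) → L}
    (h : DiagSubstPreservesInf (dualMap f)) : DiagSubstPreservesSup f :=
  h

end Lattice

section Bounded

variable [DistribLattice L] [BoundedOrder L] {n : ℕ} {f : (Fin n → L) → L}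

theorem condH_dualMap : CondH (dualMap f) ↔ CondHDual f :=
  ⟨fun h x c h0 h1 => h x c h1 h0, fun h x c h0 h1 => h x c h1 h0⟩

theorem condHDual_dualMap : CondHDual (dualMap f) ↔ CondH f :=
  ⟨fun h x c h0 h1 => h x c h1 h0, fun h x c h0 h1 => h x c h1 h0⟩

theorem condVDual_of_condV_dualMap (h : CondV (dualMap f)) : CondVDual f :=
  fun x c h0 h1 => h x c h1 h0

theorem map_sup_const_le (hf : Monotone f) (hH : CondH f) (hHd : CondHDual f)
    (x : Fin n → L) (c : L) : (f fun i => x i ⊔ c) ≤ f x ⊔ c := by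
  have h01 : f (fun _ => ⊥) ≤ f (fun _ => ⊤) := hf fun _ => bot_le
  set c' := c ⊓ f (fun _ => ⊤) ⊔ f fun _ => ⊥
  calc (f fun i => x i ⊔ c) = f fun i => (x i ⊔ c) ⊓ f (fun _ => ⊤) := by
        rw [hH _ _ h01 le_rfl, inf_eq_left.2 (hf fun _ => le_top)]
    _ ≤ f fun i => x i ⊔ c' := hf fun i => by
        rw [inf_sup_right]; exact sup_le_sup inf_le_left le_sup_left
    _ = f x ⊔ c' := hHd x c' le_sup_right (sup_le inf_le_right h01)
    _ ≤ f x ⊔ c := sup_le le_sup_left <|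
        sup_le (le_sup_of_le_right inf_le_left) (le_sup_of_le_left (hf fun _ => bot_le))

theorem inf_const_le_map_inf (hf : Monotone f) (hH : CondH f) (hHd : CondHDual f)
    (x : Fin n → L) (c : L) : f x ⊓ c ≤ f fun i => x i ⊓ c :=
  map_sup_const_le (f := dualMap f) hf.dualMap (condH_dualMap.2 hHd) (condHDual_dualMap.2 hH) x c

theorem condV_of_condH_condHDual (hf : Monotone f) (hH : CondH f) (hHd : CondHDual f) :
    CondV f := by
  intro x c _ _
  set z : Fin n → L := fun i => if x i ≤ c then ⊥ else x i
  have hzx : z ≤ x := fun i => by by_cases h : x i ≤ c <;> simp [z, h]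
  have hxz : x ≤ fun i => z i ⊔ c := fun i => by by_cases h : x i ≤ c <;> simp [z, h]
  have hfx : f x = f z ⊔ f x ⊓ c :=
    eq_sup_inf_of_le_sup_of_inf_le (hf hzx) le_rfl
      ((hf hxz).trans (map_sup_const_le hf hH hHd z c)) inf_le_left
  refine le_antisymm ?_ (sup_le (hf fun i => inf_le_left) (hf hzx))
  rw [hfx, sup_comm]
  exact sup_le_sup_right (inf_const_le_map_inf hf hH hHd x c) _

theorem map_subst_eq_sup_inf (hf : Monotone f) (hH : CondH f) (hHd : CondHDual f)
    (K : Set (Fin n)) (a : Fin n → L) (t : L) :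
    (f fun i => if i ∈ K then a i else t) =
      (f fun i => if i ∈ K then a i else ⊥) ⊔ (f fun i => if i ∈ K then a i else ⊤) ⊓ t := by
  refine eq_sup_inf_of_le_sup_of_inf_le (hf fun i => ?_) (hf fun i => ?_) ?_ ?_
  · split_ifs <;> simp
  · split_ifs <;> simp
  · refine (hf fun i => ?_).trans (map_sup_const_le hf hH hHd _ t)
    split_ifs <;> simp
  · refine (inf_const_le_map_inf hf hH hHd _ t).trans (hf fun i => ?_)
    split_ifs <;> simp

theorem diagSubstPreservesInf_of_condH_condHDual (hf : Monotone f) (hH : CondH f)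
    (hHd : CondHDual f) : DiagSubstPreservesInf f := by
  intro K a
  show PreservesInf fun t => f fun i => if i ∈ K then a i else t
  rw [funext (map_subst_eq_sup_inf hf hH hHd K a)]
  exact preservesInf_sup_inf _ _

end Bounded

/-- If an order-preserving function satisfies (H) and (H*), then it
satisfies (V) and (V*); moreover, for every function `g` obtained from `f` by
substituting constants for variables, the diagonal `δ_g` preserves `∧` and `∨`. -/
theorem condV_condVDual_diag_of_condH_condHDual
    {L : Type*} [DistribLattice L] [BoundedOrder L] {n : ℕ}
    (f : (Fin n → L) → L) (hf : Monotone f)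
    (hH : CondH f) (hHd : CondHDual f) :
    CondV f ∧ CondVDual f ∧ DiagSubstPreservesInf f ∧ DiagSubstPreservesSup f := by
  have hH' : CondH (dualMap f) := condH_dualMap.2 hHd
  have hHd' : CondHDual (dualMap f) := condHDual_dualMap.2 hH
  exact ⟨condV_of_condH_condHDual hf hH hHd,
    condVDual_of_condV_dualMap (condV_of_condH_condHDual hf.dualMap hH' hHd'),
    diagSubstPreservesInf_of_condH_condHDual hf hH hHd,
    diagSubstPreservesSup_of_diagSubstPreservesInf_dualMap
      (diagSubstPreservesInf_of_condH_condHDual hf.dualMap hH' hHd')⟩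
end

section
/- Let L be a bounded distributive lattice and let f : Lⁿ → L be an order-preserving function satisfying condition (H) and its dual condition (H*). Then every function g = f_K^a obtained from f by substituting constants for variables (for any K ⊆ {1,…,n} and a ∈ Lⁿ) also satisfies condition (H) and its dual condition (H*) (with the interval bounds given by g's own values at the constant 0 and constant 1 vectors). -/
open Classical

variable {L : Type*}

/-! Write `g = f_K^a` and let `g(0̄) ≤ c ≤ g(1̄)`; by monotonicity also `f(0̄) ≤ c ≤ f(1̄)`.
Then `g(x) ∧ c = f(a_K x ∧ c̄) ≤ g(x ∧ c̄)` by (H) for `f`, while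
`g(x ∧ c̄) ≤ f(a_K 0̄ ∨ c̄) = g(0̄) ∨ c = c` by (H*) for `f`. Passing to the order dual `Lᵒᵈ`
swaps (H) and (H*), so (H*) for `g` is the same argument. -/

section Substitution

open OrderDual

variable [DistribLattice L] [BoundedOrder L] {n : ℕ}

theorem condH_toDual_iff {f : (Fin n → L) → L} :
    CondH (fun x : Fin n → Lᵒᵈ => toDual (f fun i => ofDual (x i))) ↔ CondHDual f :=
  ⟨fun h x c h₀ h₁ => h x c h₁ h₀, fun h x c h₀ h₁ => h x c h₁ h₀⟩

theorem condHDual_toDual_iff {f : (Fin n → L) → L} :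
    CondHDual (fun x : Fin n → Lᵒᵈ => toDual (f fun i => ofDual (x i))) ↔ CondH f :=
  ⟨fun h x c h₀ h₁ => h x c h₁ h₀, fun h x c h₀ h₁ => h x c h₁ h₀⟩

theorem Monotone.condH_piecewise {f : (Fin n → L) → L} (hf : Monotone f) (hH : CondH f)
    (hHd : CondHDual f) (K : Set (Fin n)) (a : Fin n → L) :
    CondH fun x => f (K.piecewise a x) := by
  intro x c hc₀ hc₁
  have hfc₀ : f (fun _ => ⊥) ≤ c := (hf bot_le).trans hc₀
  have hfc₁ : c ≤ f (fun _ => ⊤) := hc₁.trans (hf le_top)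
  refine le_antisymm (le_inf (hf ?_) ?_) ?_
  · exact Set.piecewise_mono (fun _ _ => le_rfl) fun _ _ => inf_le_left
  · calc f (K.piecewise a fun i => x i ⊓ c)
        ≤ f fun i => K.piecewise a (fun _ => ⊥) i ⊔ c :=
          hf fun i => by by_cases hi : i ∈ K <;> simp [hi]
      _ = f (K.piecewise a fun _ => ⊥) ⊔ c := hHd _ c hfc₀ hfc₁
      _ = c := sup_eq_right.2 hc₀
  · calc f (K.piecewise a x) ⊓ c
        = f fun i => K.piecewise a x i ⊓ c := (hH _ c hfc₀ hfc₁).symm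
      _ ≤ f (K.piecewise a fun i => x i ⊓ c) :=
          hf fun i => by by_cases hi : i ∈ K <;> simp [hi]

end Substitution

/-- If an order-preserving function `f` satisfies (H) and (H*), then so
does every function `f_K^a` obtained from `f` by substituting constants for the
variables in `K` (with interval bounds given by the values of `f_K^a` at the constant
`0` and constant `1` vectors). Here `f_K^a` is encoded as the function on `Lⁿ`
ignoring the coordinates in `K`: `x ↦ f(y)` with `y i = a i` for `i ∈ K`, `y i = x i`
otherwise. -/
theorem subst_condH_condHDual_of_condH_condHDual
    {L : Type*} [DistribLattice L] [BoundedOrder L] {n : ℕ}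
    (f : (Fin n → L) → L) (hf : Monotone f)
    (hH : CondH f) (hHd : CondHDual f)
    (K : Set (Fin n)) (a : Fin n → L) :
    CondH (fun x : Fin n → L => f fun i => if i ∈ K then a i else x i) ∧
      CondHDual (fun x : Fin n → L => f fun i => if i ∈ K then a i else x i) := by
  refine ⟨hf.condH_piecewise hH hHd K a, condH_toDual_iff.1 ?_⟩
  refine Monotone.condH_piecewise ?_ (condH_toDual_iff.2 hHd) (condHDual_toDual_iff.2 hH) K a
  exact fun _ _ hxy => hf hxy
end

section
/- Let L be a bounded distributive lattice and let C be a class of functions (C_n being a set of functions Lⁿ → L for each n ≥ 1) such that: (i) every unary member of C is a lattice polynomial function, and (ii) for n > 1, every unary function obtained from an n-ary member of C by substituting constants for n − 1 of its variables is also in C. Then every member of C is a lattice polynomial function. -/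
open Classical

variable {L : Type*}

/-!
Every unary lattice polynomial has the form `t ↦ (t ∧ p(1)) ∨ p(0)`, since this form is
preserved by pointwise meets and joins; so the unary sections of a member of `C`, lying in
`C 1`, have this form. Conversely, if every unary section of `f : Lⁿ → L` has this form, then
`f(x) = (xₙ ∧ f(x', 1)) ∨ f(x', 0)`, where the `(n-1)`-ary functions `x' ↦ f(x', c)` again have
sections of this form, and induction on `n` shows that `f` is a lattice polynomial.
-/

lemma Fin.update_last_eq_snoc_init {α : Type*} {m : ℕ} (x : Fin (m + 1) → α) (c : α) :
    Function.update x (Fin.last m) c = Fin.snoc (Fin.init x) c := by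
  conv_lhs => rw [← Fin.snoc_init_self x]
  exact Fin.update_snoc_last _ _ _

section

variable [DistribLattice L]

lemma IsLatticePolynomial.comp {m n : ℕ} {g : (Fin m → L) → L} (hg : IsLatticePolynomial g)
    (σ : Fin m → Fin n) : IsLatticePolynomial fun x : Fin n → L => g (x ∘ σ) := by
  induction hg with
  | proj k => exact .proj (σ k)
  | const c => exact .const c
  | inf _ _ ihf ihg => exact .inf ihf ihg
  | sup _ _ ihf ihg => exact .sup ihf ihg

lemma inf_sup_inf_inf_sup_of_le {x a b c d : L} (hba : b ≤ a) (hdc : d ≤ c) :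
    (x ⊓ a ⊔ b) ⊓ (x ⊓ c ⊔ d) = x ⊓ (a ⊓ c) ⊔ b ⊓ d := by
  rw [sup_inf_right x a b, sup_inf_right x c d, sup_eq_left.mpr hba, sup_eq_left.mpr hdc,
    inf_inf_inf_comm, ← sup_inf_left, inf_sup_right, inf_eq_left.mpr (inf_le_inf hba hdc)]

lemma inf_sup_sup_inf_sup (x a b c d : L) :
    (x ⊓ a ⊔ b) ⊔ (x ⊓ c ⊔ d) = x ⊓ (a ⊔ c) ⊔ (b ⊔ d) := by
  rw [inf_sup_left, sup_sup_sup_comm]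

variable [BoundedOrder L]

/-- Equivalently `φ t = med (φ ⊥) t (φ ⊤)`: the shape of the unary sections of lattice
polynomials. -/
def IsInfSupForm (φ : L → L) : Prop := ∀ t, φ t = t ⊓ φ ⊤ ⊔ φ ⊥

namespace IsInfSupForm

variable {φ ψ : L → L}

lemma bot_le_top (hφ : IsInfSupForm φ) : φ ⊥ ≤ φ ⊤ := by
  rw [hφ ⊤]
  exact le_sup_right

lemma inf (hφ : IsInfSupForm φ) (hψ : IsInfSupForm ψ) : IsInfSupForm fun t => φ t ⊓ ψ t := by
  intro t
  dsimp only
  rw [hφ t, hψ t, inf_sup_inf_inf_sup_of_le hφ.bot_le_top hψ.bot_le_top]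

lemma sup (hφ : IsInfSupForm φ) (hψ : IsInfSupForm ψ) : IsInfSupForm fun t => φ t ⊔ ψ t := by
  intro t
  dsimp only
  rw [hφ t, hψ t, inf_sup_sup_inf_sup]

end IsInfSupForm

lemma IsLatticePolynomial.isInfSupForm_update {n : ℕ} {p : (Fin n → L) → L}
    (hp : IsLatticePolynomial p) (a : Fin n → L) (k : Fin n) :
    IsInfSupForm fun t => p (Function.update a k t) := by
  induction hp with
  | proj j =>
    intro t
    rcases eq_or_ne j k with rfl | hjk
    · simp
    · simp [Function.update_of_ne hjk]
  | const c => exact fun t => by simp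
  | inf _ _ ihf ihg => exact ihf.inf ihg
  | sup _ _ ihf ihg => exact ihf.sup ihg

theorem isLatticePolynomial_of_isInfSupForm_update {n : ℕ} {f : (Fin n → L) → L}
    (hf : ∀ a k, IsInfSupForm fun t => f (Function.update a k t)) :
    IsLatticePolynomial f := by
  induction n with
  | zero =>
    have hconst : f = fun _ => f default := funext fun x => congrArg f (Subsingleton.elim _ _)
    exact hconst ▸ .const _
  | succ m ih =>
    have hsnoc (c : L) : IsLatticePolynomial fun y : Fin m → L => f (Fin.snoc y c) :=
      ih fun a k => by simpa only [Fin.snoc_update] using hf (Fin.snoc a c) k.castSucc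
    have hsplit : f = fun x => x (Fin.last m) ⊓ f (Fin.snoc (Fin.init x) ⊤) ⊔
        f (Fin.snoc (Fin.init x) ⊥) := by
      funext x
      simpa only [Function.update_eq_self, Fin.update_last_eq_snoc_init]
        using hf x (Fin.last m) (x (Fin.last m))
    rw [hsplit]
    exact .sup (.inf (.proj _) ((hsnoc ⊤).comp Fin.castSucc)) ((hsnoc ⊥).comp Fin.castSucc)

end

/-- Let `C` be a class of functions (with `C n` a set of `n`-ary
functions for each `n`) such that (i) every unary member of `C` is a lattice
polynomial function, and (ii) for `n > 1`, every unary function obtained from an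
`n`-ary member of `C` by substituting constants for `n − 1` variables is in `C`.
Then every member of `C` (of arity `≥ 1`) is a lattice polynomial function. -/
theorem class_is_polynomial
    {L : Type*} [DistribLattice L] [BoundedOrder L]
    (C : ∀ n : ℕ, Set ((Fin n → L) → L))
    (h1 : ∀ f ∈ C 1, IsLatticePolynomial f)
    (h2 : ∀ n : ℕ, 1 < n → ∀ f ∈ C n, ∀ (a : Fin n → L) (k : Fin n),
      (fun x : Fin 1 → L => f (Function.update a k (x 0))) ∈ C 1) :
    ∀ n : ℕ, 1 ≤ n → ∀ f ∈ C n, IsLatticePolynomial f := by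
  intro n hn f hf
  rcases hn.eq_or_lt with rfl | hn
  · exact h1 f hf
  · refine isLatticePolynomial_of_isInfSupForm_update fun a k => ?_
    simpa only [Function.update_self]
      using (h1 _ (h2 n hn f hf a k)).isInfSupForm_update (fun _ => ⊥) 0
end
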